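/- arXiv:1801.09127 — 2 statements merged into one kernel-verified Lean document; each statement's English description precedes it below -/
import Mathlib

section
/- If a left R-module M has finite projective dimension, then Gpd(M) = X-Gpd(M) = pd(M). In particular, a module that is X-Gorenstein projective and of finite projective dimension is projective. -/
open CategoryTheory DirectSum

universe u

/-- An `𝒳`-complete projective resolution: a doubly infinite exact sequence of
projective `R`-modules that remains exact after applying `Hom_R(-, Y)`
for every `Y` in the class `𝒳`. -/
structure XCompleteResolution (R : Type u) [Ring R] (𝒳 : ModuleCat.{u} R → Prop) where
  P : ℤ → ModuleCat.{u} R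
  d : ∀ n : ℤ, P n →ₗ[R] P (n + 1)
  projective : ∀ n, Module.Projective R (P n)
  exact : ∀ n, Function.Exact (d n) (d (n + 1))
  homExact : ∀ (Y : ModuleCat.{u} R), 𝒳 Y → ∀ n : ℤ,
    Function.Exact (fun f : P (n + 1 + 1) →ₗ[R] Y => f ∘ₗ d (n + 1))
      (fun f : P (n + 1) →ₗ[R] Y => f ∘ₗ d n)

/-- `G` is `𝒳`-Gorenstein projective: it is a kernel in an `𝒳`-complete
projective resolution. -/
def XGorensteinProjective (R : Type u) [Ring R] (𝒳 : ModuleCat.{u} R → Prop)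
    (G : ModuleCat.{u} R) : Prop :=
  ∃ C : XCompleteResolution R 𝒳, Nonempty (G ≃ₗ[R] LinearMap.ker (C.d 0))

/-- `ResWithKernel R 𝒞 n K M` says that there is an exact sequence
`0 → K → G_{n-1} → ⋯ → G_0 → M → 0` in which every `G_i` belongs to the class `𝒞`. -/
def ResWithKernel (R : Type u) [Ring R] (𝒞 : ModuleCat.{u} R → Prop) :
    ℕ → ModuleCat.{u} R → ModuleCat.{u} R → Prop
  | 0, K, M => Nonempty (K ≃ₗ[R] M)
  | n + 1, K, M => ∃ (G L : ModuleCat.{u} R) (f : L →ₗ[R] G) (g : G →ₗ[R] M),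
      𝒞 G ∧ Function.Injective f ∧ Function.Surjective g ∧ Function.Exact f g ∧
      ResWithKernel R 𝒞 n K L

/-- The resolution dimension of `M` with respect to a class `𝒞` of modules:
the least length of a resolution of `M` by modules in `𝒞` (`⊤` if none exists). -/
noncomputable def relDim (R : Type u) [Ring R] (𝒞 : ModuleCat.{u} R → Prop)
    (M : ModuleCat.{u} R) : ℕ∞ :=
  sInf {n : ℕ∞ | ∃ m : ℕ, n = m ∧ ∃ K, 𝒞 K ∧ ResWithKernel R 𝒞 m K M}

/-- The `𝒳`-Gorenstein projective dimension of `M`. -/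
noncomputable def xGpd (R : Type u) [Ring R] (𝒳 : ModuleCat.{u} R → Prop)
    (M : ModuleCat.{u} R) : ℕ∞ :=
  relDim R (XGorensteinProjective R 𝒳) M

/-- The projective dimension of `M`. -/
noncomputable def pdim (R : Type u) [Ring R] (M : ModuleCat.{u} R) : ℕ∞ :=
  relDim R (fun N => Module.Projective R N) M

/-- The Gorenstein projective dimension of `M`:
the `𝒳`-Gorenstein projective dimension for `𝒳` the class of projective modules. -/
noncomputable def gpd (R : Type u) [Ring R] (M : ModuleCat.{u} R) : ℕ∞ :=
  xGpd R (fun N => Module.Projective R N) M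

/-!
An `𝒳`-Gorenstein projective module `G` satisfies `Ext^{i+1}(G, Y) = 0` for `Y ∈ 𝒳`: the
Hom-exactness of its complete resolution says that every map from a kernel to `Y` extends over
the next projective, which kills `Ext¹` of the following kernel, and dimension shifting does the
rest. As `𝒳` contains the projectives, the same vanishing holds against every module `L` of
finite projective dimension. Dimension shifting along an `𝒳`-Gorenstein projective resolution
of `M` of length `m` then gives `Ext^{>m}(M, L) = 0` for all such `L`. When `pd M < ∞` this
forces `pd M ≤ m`: passing to syzygies reduces to `m = 0`, where `Ext¹(M, K) = 0` for the first
syzygy `K`, itself of finite projective dimension, splits `0 → K → P → M → 0`.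
For the reverse inequality, a projective `P` is `𝒳`-Gorenstein projective through the
contractible complex `⋯ → P × P → P × P → ⋯`, `(a, b) ↦ (b, 0)`.
-/

open Abelian Limits

universe w v

namespace CategoryTheory

section

variable {C : Type*} [Category.{v} C] [Abelian C] [HasExt.{w} C]

lemma Iso.ext_eq_zero {X X' : C} (i : X ≅ X') {Y : C} {n : ℕ} (h : ∀ e : Ext X' Y n, e = 0)
    (e : Ext X Y n) : e = 0 := by
  rw [← Ext.mk₀_id_comp e, ← i.hom_inv_id, ← Ext.mk₀_comp_mk₀,
    Ext.comp_assoc_of_second_deg_zero, h ((Ext.mk₀ i.inv).comp e (zero_add n)), Ext.comp_zero]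

namespace ShortComplex.ShortExact

variable {S : ShortComplex C} (hS : S.ShortExact)
include hS

lemma extFrom_X₃_eq_zero {Y : C} {n : ℕ} (h₁ : ∀ e : Ext S.X₁ Y n, e = 0)
    (h₂ : ∀ e : Ext S.X₂ Y (n + 1), e = 0) (e : Ext S.X₃ Y (n + 1)) : e = 0 := by
  obtain ⟨x₁, rfl⟩ := Ext.contravariant_sequence_exact₃ hS Y e (h₂ _) (add_comm 1 n)
  rw [h₁ x₁, Ext.comp_zero]

lemma extFrom_X₁_eq_zero {Y : C} {n : ℕ} (h₂ : ∀ e : Ext S.X₂ Y n, e = 0)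
    (h₃ : ∀ e : Ext S.X₃ Y (n + 1), e = 0) (e : Ext S.X₁ Y n) : e = 0 := by
  obtain ⟨x₂, rfl⟩ := Ext.contravariant_sequence_exact₁ hS Y e (add_comm 1 n) (h₃ _)
  rw [h₂ x₂, Ext.comp_zero]

lemma extTo_X₃_eq_zero {X : C} {n : ℕ} (h₁ : ∀ e : Ext X S.X₁ (n + 1), e = 0)
    (h₂ : ∀ e : Ext X S.X₂ n, e = 0) (e : Ext X S.X₃ n) : e = 0 := by
  obtain ⟨x₂, rfl⟩ := Ext.covariant_sequence_exact₃ X hS e rfl (h₁ _)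
  rw [h₂ x₂, Ext.zero_comp]

lemma extFrom_X₃_one_eq_zero_of_forall_factors [Projective S.X₂] {Y : C}
    (h : ∀ φ : S.X₁ ⟶ Y, ∃ F : S.X₂ ⟶ Y, S.f ≫ F = φ) (e : Ext S.X₃ Y 1) : e = 0 := by
  obtain ⟨x₁, rfl⟩ :=
    Ext.contravariant_sequence_exact₃ hS Y e (Ext.eq_zero_of_projective _) (add_zero 1)
  obtain ⟨F, hF⟩ := h (Ext.homEquiv₀ x₁)
  rw [← Ext.mk₀_homEquiv₀_apply x₁, ← hF, ← Ext.mk₀_comp_mk₀, hS.extClass_comp_assoc]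

lemma projective_X₃_of_extClass_eq_zero [Projective S.X₂] (h : hS.extClass = 0) :
    Projective S.X₃ := by
  obtain ⟨s, hs⟩ := Ext.covariant_sequence_exact₃ S.X₃ hS (Ext.mk₀ (𝟙 S.X₃)) rfl
    (by rw [Ext.mk₀_id_comp, h])
  have hsplit : Ext.homEquiv₀ s ≫ S.g = 𝟙 S.X₃ := by
    apply Ext.homEquiv₀.symm.injective
    simpa [← Ext.mk₀_comp_mk₀] using hs
  exact Retract.projective ⟨_, _, hsplit⟩

end ShortComplex.ShortExact

end

variable {C : Type*} [Category.{v} C] [Abelian C] [EnoughProjectives C]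

noncomputable def Projective.syzygyShortComplex (X : C) : ShortComplex C :=
  ShortComplex.mk (kernel.ι (Projective.π X)) (Projective.π X) (kernel.condition _)

lemma Projective.shortExact_syzygyShortComplex (X : C) : (syzygyShortComplex X).ShortExact :=
  have : Mono (syzygyShortComplex X).f := by dsimp [syzygyShortComplex]; infer_instance
  have : Epi (syzygyShortComplex X).g := by dsimp [syzygyShortComplex]; infer_instance
  { exact := ShortComplex.exact_kernel _ }

instance (X : C) : Projective (Projective.syzygyShortComplex X).X₂ := by
  dsimp [Projective.syzygyShortComplex]; infer_instance

lemma hasProjectiveDimensionLT_syzygy {X : C} {n : ℕ} (hX : HasProjectiveDimensionLT X (n + 2)) :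
    HasProjectiveDimensionLT (Projective.syzygyShortComplex X).X₁ (n + 1) :=
  (Projective.shortExact_syzygyShortComplex X).hasProjectiveDimensionLT_X₁ _
    (hasProjectiveDimensionLT_of_ge _ 1 _ (by omega)) hX

variable [HasExt.{w} C]

lemma ext_eq_zero_of_forall_projective {X : C}
    (hX : ∀ Q : C, Projective Q → ∀ (i : ℕ) (e : Ext X Q (i + 1)), e = 0)
    {L : C} {n : ℕ} (hL : HasProjectiveDimensionLT L n) (i : ℕ) (e : Ext X L (i + 1)) : e = 0 := by
  replace hL : HasProjectiveDimensionLT L (n + 1) := hasProjectiveDimensionLT_of_ge L n _ (by omega)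
  induction n generalizing L i with
  | zero => exact hX L (projective_iff_hasProjectiveDimensionLT_one.2 hL) i e
  | succ n ih =>
    exact (Projective.shortExact_syzygyShortComplex L).extTo_X₃_eq_zero
      (fun e => ih (i + 1) e (hasProjectiveDimensionLT_syzygy hL)) (hX _ inferInstance i) e

lemma hasProjectiveDimensionLT_of_ext_eq_zero (m : ℕ) {X : C} {n : ℕ}
    (hX : HasProjectiveDimensionLT X n)
    (hext : ∀ (L : C) (k : ℕ), HasProjectiveDimensionLT L k →
      ∀ (i : ℕ) (e : Ext X L (i + m + 1)), e = 0) :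
    HasProjectiveDimensionLT X (m + 1) := by
  induction m generalizing X n with
  | zero =>
    have hS := Projective.shortExact_syzygyShortComplex X
    have hK := hasProjectiveDimensionLT_syzygy
      (hasProjectiveDimensionLT_of_ge X n (n + 2) (by omega))
    exact projective_iff_hasProjectiveDimensionLT_one.1
      (hS.projective_X₃_of_extClass_eq_zero (hext _ _ hK 0 _))
  | succ m ih =>
    have hS := Projective.shortExact_syzygyShortComplex X
    have hK := hasProjectiveDimensionLT_syzygy
      (hasProjectiveDimensionLT_of_ge X n (n + 2) (by omega))
    have hKm := ih hK fun L k hL i =>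
      hS.extFrom_X₁_eq_zero (fun e => Ext.eq_zero_of_projective e) (hext L k hL i)
    exact hS.hasProjectiveDimensionLT_X₃ (m + 1) hKm
      (hasProjectiveDimensionLT_of_ge _ 1 _ (by omega))

end CategoryTheory

section Modules

open LinearMap

variable {R : Type u} [Ring R]

namespace XCompleteResolution

variable {𝒳 : ModuleCat.{u} R → Prop} (C : XCompleteResolution R 𝒳)

noncomputable def cyclesShortComplex (n : ℤ) : ShortComplex (ModuleCat.{u} R) :=
  ShortComplex.mk (ModuleCat.ofHom (ker (C.d n)).subtype)
    (ModuleCat.ofHom ((C.d n).codRestrict (ker (C.d (n + 1)))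
      fun x => (C.exact n).apply_apply_eq_zero x))
    (by ext ⟨x, hx⟩; exact hx)

lemma shortExact_cyclesShortComplex (n : ℤ) : (C.cyclesShortComplex n).ShortExact := by
  refine ModuleCat.shortComplex_shortExact _ ?_ Subtype.val_injective ?_
  · intro x
    constructor
    · intro hx
      exact ⟨⟨x, congrArg Subtype.val hx⟩, rfl⟩
    · rintro ⟨⟨x, hx⟩, rfl⟩
      exact Subtype.ext hx
  · rintro ⟨y, hy⟩
    obtain ⟨x, rfl⟩ := (C.exact n y).1 hy
    exact ⟨x, rfl⟩

instance (n : ℤ) : Projective (C.cyclesShortComplex n).X₂ :=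
  (IsProjective.iff_projective _).1 (C.projective n)

lemma cyclesShortComplex_f_factors {Y : ModuleCat.{u} R} (hY : 𝒳 Y) (n : ℤ)
    (φ : (C.cyclesShortComplex n).X₁ ⟶ Y) :
    ∃ F : (C.cyclesShortComplex n).X₂ ⟶ Y, (C.cyclesShortComplex n).f ≫ F = φ := by
  obtain ⟨m, rfl⟩ : ∃ m, n = m + 1 + 1 := ⟨n - 2, by ring⟩
  let π := (C.cyclesShortComplex (m + 1)).g
  have hπ : Function.Surjective π :=
    (C.shortExact_cyclesShortComplex (m + 1)).moduleCat_surjective_g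
  have hφπ : (φ.hom ∘ₗ π.hom) ∘ₗ C.d m = 0 := by
    ext x
    have : π.hom (C.d m x) = 0 := Subtype.ext ((C.exact m).apply_apply_eq_zero x)
    change φ.hom (π.hom (C.d m x)) = 0
    rw [this]
    exact map_zero φ.hom
  obtain ⟨F, hF⟩ := (C.homExact Y hY m _).1 hφπ
  refine ⟨ModuleCat.ofHom F, ?_⟩
  ext z
  obtain ⟨x, rfl⟩ := hπ z
  exact LinearMap.congr_fun hF x

lemma ext_cycles_eq_zero {Y : ModuleCat.{u} R} (hY : 𝒳 Y) (i : ℕ) :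
    ∀ (n : ℤ) (e : Ext (C.cyclesShortComplex n).X₃ Y (i + 1)), e = 0 := by
  induction i with
  | zero =>
    exact fun n => (C.shortExact_cyclesShortComplex n).extFrom_X₃_one_eq_zero_of_forall_factors
      (C.cyclesShortComplex_f_factors hY n)
  | succ i ih =>
    intro n
    obtain ⟨n, rfl⟩ : ∃ m, n = m + 1 := ⟨n - 1, by ring⟩
    exact (C.shortExact_cyclesShortComplex (n + 1)).extFrom_X₃_eq_zero (ih n)
      fun e => Ext.eq_zero_of_projective e

end XCompleteResolution

namespace XGorensteinProjective

variable {𝒳 : ModuleCat.{u} R → Prop} {G : ModuleCat.{u} R}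

lemma ext_eq_zero (hG : XGorensteinProjective R 𝒳 G) {Y : ModuleCat.{u} R} (hY : 𝒳 Y)
    (i : ℕ) (e : Ext G Y (i + 1)) : e = 0 := by
  obtain ⟨C, ⟨φ⟩⟩ := hG
  -- `ker (C.d 0)` is the third term of the short exact sequence at `-1`
  exact Iso.ext_eq_zero (X' := (C.cyclesShortComplex (-1)).X₃) φ.toModuleIso
    (C.ext_cycles_eq_zero hY i (-1)) e

lemma ext_eq_zero_of_hasProjectiveDimensionLT
    (h𝒳 : ∀ P : ModuleCat.{u} R, Module.Projective R P → 𝒳 P)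
    (hG : XGorensteinProjective R 𝒳 G) {L : ModuleCat.{u} R} {n : ℕ}
    (hL : HasProjectiveDimensionLT L n) (i : ℕ) (e : Ext G L (i + 1)) : e = 0 :=
  ext_eq_zero_of_forall_projective
    (fun Q hQ => hG.ext_eq_zero (h𝒳 Q ((IsProjective.iff_projective Q).2 hQ))) hL i e

lemma of_projective (hG : Module.Projective R G) : XGorensteinProjective R 𝒳 G := by
  let d : G × G →ₗ[R] G × G := inl R G G ∘ₗ snd R G G
  have hd : Function.Exact d d := by
    rintro ⟨a, b⟩
    simp [d, Prod.ext_iff, eq_comm]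
  refine ⟨{ P := fun _ => ModuleCat.of R (G × G)
            d := fun _ => d
            projective := fun _ => inferInstance
            exact := fun _ => hd
            homExact := fun Y _ _ f => ⟨fun hf => ⟨f ∘ₗ inr R G G ∘ₗ fst R G G, ?_⟩, ?_⟩ }, ⟨?_⟩⟩
  · ext x
    · simpa [d, Prod.mk_zero_zero] using (LinearMap.congr_fun hf (0, x)).symm
    · simp [d]
  · rintro ⟨F, rfl⟩
    change (F ∘ₗ d) ∘ₗ d = 0
    rw [LinearMap.comp_assoc, hd.linearMap_comp_eq_zero, LinearMap.comp_zero]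
  · exact LinearEquiv.ofBijective ((inl R G G).codRestrict (ker d) fun a => by simp [d])
      ⟨fun a b h => congrArg (fun z => z.1.1) h,
        fun ⟨⟨a, b⟩, h⟩ => by
          obtain rfl : b = 0 := by simpa [d] using h
          exact ⟨a, rfl⟩⟩

end XGorensteinProjective

namespace ResWithKernel

variable {𝒞 𝒞' : ModuleCat.{u} R → Prop}

lemma mono (h : ∀ N, 𝒞 N → 𝒞' N) :
    ∀ {m : ℕ} {K M : ModuleCat.{u} R}, ResWithKernel R 𝒞 m K M → ResWithKernel R 𝒞' m K M
  | 0, _, _, hKM => hKM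
  | _ + 1, _, _, ⟨G, L, f, g, hG, hf, hg, hfg, hL⟩ =>
    ⟨G, L, f, g, h G hG, hf, hg, hfg, mono h hL⟩

lemma ext_eq_zero {Y : ModuleCat.{u} R}
    (h𝒞 : ∀ G, 𝒞 G → ∀ (i : ℕ) (e : Ext G Y (i + 1)), e = 0) {K : ModuleCat.{u} R} (hK : 𝒞 K) :
    ∀ {m : ℕ} {M : ModuleCat.{u} R}, ResWithKernel R 𝒞 m K M →
      ∀ (i : ℕ) (e : Ext M Y (i + m + 1)), e = 0
  | 0, _, ⟨φ⟩, i => Iso.ext_eq_zero φ.toModuleIso.symm (h𝒞 K hK i)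
  | _ + 1, _, ⟨G, _, f, g, hG, hf, hg, hfg, hL⟩, i =>
    (ModuleCat.shortComplex_shortExact (ModuleCat.shortComplexOfCompEqZero f g
      hfg.linearMap_comp_eq_zero) hfg hf hg).extFrom_X₃_eq_zero
      (ext_eq_zero h𝒞 hK hL i) (h𝒞 G hG _)

lemma hasProjectiveDimensionLT {K : ModuleCat.{u} R} (hK : Module.Projective R K) :
    ∀ {m : ℕ} {M : ModuleCat.{u} R}, ResWithKernel R (fun N => Module.Projective R N) m K M →
      HasProjectiveDimensionLT M (m + 1)
  | 0, _, ⟨φ⟩ =>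
    have : Projective K := (IsProjective.iff_projective K).1 hK
    hasProjectiveDimensionLT_of_iso φ.toModuleIso 1
  | m + 1, _, ⟨G, _, f, g, hG, hf, hg, hfg, hL⟩ =>
    have : Projective G := (IsProjective.iff_projective G).1 hG
    (ModuleCat.shortComplex_shortExact (ModuleCat.shortComplexOfCompEqZero f g
      hfg.linearMap_comp_eq_zero) hfg hf hg).hasProjectiveDimensionLT_X₃ (m + 1)
      (hasProjectiveDimensionLT hK hL) (hasProjectiveDimensionLT_of_ge _ 1 _ (by omega))

end ResWithKernel

lemma exists_resWithKernel_of_hasProjectiveDimensionLT :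
    ∀ (m : ℕ) {M : ModuleCat.{u} R}, HasProjectiveDimensionLT M (m + 1) →
      ∃ K : ModuleCat.{u} R, Module.Projective R K ∧
        ResWithKernel R (fun N => Module.Projective R N) m K M
  | 0, M, hM => ⟨M, (IsProjective.iff_projective M).2
      (projective_iff_hasProjectiveDimensionLT_one.2 hM), ⟨LinearEquiv.refl R M⟩⟩
  | m + 1, M, hM => by
    have hS := Projective.shortExact_syzygyShortComplex M
    obtain ⟨K, hK, hres⟩ :=
      exists_resWithKernel_of_hasProjectiveDimensionLT m (hasProjectiveDimensionLT_syzygy hM)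
    exact ⟨K, hK, _, _, _, _, (IsProjective.iff_projective _).2
      (inferInstanceAs (Projective (Projective.syzygyShortComplex M).X₂)),
      hS.moduleCat_injective_f, hS.moduleCat_surjective_g,
      (ShortComplex.ShortExact.moduleCat_exact_iff_function_exact _).1 hS.exact, hres⟩

section relDim

variable {𝒞 𝒞' : ModuleCat.{u} R → Prop} {M : ModuleCat.{u} R}

lemma relDim_le {K : ModuleCat.{u} R} {m : ℕ} (hK : 𝒞 K) (h : ResWithKernel R 𝒞 m K M) :
    relDim R 𝒞 M ≤ m :=
  sInf_le ⟨m, rfl, K, hK, h⟩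

lemma relDim_mono (h : ∀ N, 𝒞 N → 𝒞' N) : relDim R 𝒞' M ≤ relDim R 𝒞 M :=
  sInf_le_sInf fun _ ⟨m, hm, K, hK, hres⟩ => ⟨m, hm, K, h K hK, hres.mono h⟩

lemma exists_resWithKernel_of_relDim_ne_top (h : relDim R 𝒞 M ≠ ⊤) :
    ∃ (m : ℕ) (K : ModuleCat.{u} R), 𝒞 K ∧ ResWithKernel R 𝒞 m K M := by
  contrapose! h
  exact sInf_eq_top.2 fun _ ⟨m, _, K, hK, hres⟩ => absurd hres (h m K hK)

end relDim

variable {𝒳 : ModuleCat.{u} R → Prop} (h𝒳 : ∀ P : ModuleCat.{u} R, Module.Projective R P → 𝒳 P)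
include h𝒳

lemma ResWithKernel.hasProjectiveDimensionLT_of_pdim_ne_top {K M : ModuleCat.{u} R} {m : ℕ}
    (hM : pdim R M ≠ ⊤) (hK : XGorensteinProjective R 𝒳 K)
    (h : ResWithKernel R (XGorensteinProjective R 𝒳) m K M) :
    HasProjectiveDimensionLT M (m + 1) := by
  obtain ⟨n, K', hK', h'⟩ := exists_resWithKernel_of_relDim_ne_top hM
  exact hasProjectiveDimensionLT_of_ext_eq_zero m (h'.hasProjectiveDimensionLT hK')
    fun L _ hL => h.ext_eq_zero (fun G hG => hG.ext_eq_zero_of_hasProjectiveDimensionLT h𝒳 hL) hK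

lemma pdim_le_xGpd {M : ModuleCat.{u} R} (hM : pdim R M ≠ ⊤) : pdim R M ≤ xGpd R 𝒳 M := by
  refine le_sInf ?_
  rintro _ ⟨m, rfl, K, hK, h⟩
  obtain ⟨K', hK', h'⟩ :=
    exists_resWithKernel_of_hasProjectiveDimensionLT m
      (h.hasProjectiveDimensionLT_of_pdim_ne_top h𝒳 hM hK)
  exact relDim_le hK' h'

lemma xGpd_eq_pdim {M : ModuleCat.{u} R} (hM : pdim R M ≠ ⊤) : xGpd R 𝒳 M = pdim R M :=
  le_antisymm (relDim_mono fun _ => XGorensteinProjective.of_projective) (pdim_le_xGpd h𝒳 hM)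

lemma XGorensteinProjective.projective_of_pdim_ne_top {M : ModuleCat.{u} R}
    (hG : XGorensteinProjective R 𝒳 M) (hM : pdim R M ≠ ⊤) : Module.Projective R M :=
  (IsProjective.iff_projective M).2 (projective_iff_hasProjectiveDimensionLT_one.2
    ((show ResWithKernel R (XGorensteinProjective R 𝒳) 0 M M from ⟨LinearEquiv.refl R M⟩)
      |>.hasProjectiveDimensionLT_of_pdim_ne_top h𝒳 hM hG))

end Modules

/-- If `M` has finite projective dimension then `Gpd(M) = 𝒳-Gpd(M) = pd(M)`.
In particular, an `𝒳`-Gorenstein projective module of finite projective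
dimension is projective. -/
theorem xGpd_eq_pdim_of_finite_pdim
    (R : Type u) [Ring R] (𝒳 : ModuleCat.{u} R → Prop)
    (h𝒳 : ∀ P : ModuleCat.{u} R, Module.Projective R P → 𝒳 P) :
    (∀ M : ModuleCat.{u} R, pdim R M ≠ ⊤ →
      gpd R M = xGpd R 𝒳 M ∧ xGpd R 𝒳 M = pdim R M) ∧
    (∀ M : ModuleCat.{u} R, XGorensteinProjective R 𝒳 M → pdim R M ≠ ⊤ →
      Module.Projective R M) := by
  refine ⟨fun M hM => ⟨?_, xGpd_eq_pdim h𝒳 hM⟩,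
    fun M hG hM => hG.projective_of_pdim_ne_top h𝒳 hM⟩
  rw [gpd, xGpd_eq_pdim (fun _ hP => hP) hM, xGpd_eq_pdim h𝒳 hM]
end

section
/- Let n be a nonnegative integer. If X-Gpd(R/I) ≤ n for every left ideal I of R, then every module X in the class X has injective dimension at most n. -/
open CategoryTheory DirectSum

universe u

/-- `M` has injective dimension at most `n`. -/
def HasInjDimLE (R : Type u) [Ring R] : ℕ → ModuleCat.{u} R → Prop
  | 0, M => Module.Injective R M
  | n + 1, M => ∃ (I C : ModuleCat.{u} R) (f : M →ₗ[R] I) (g : I →ₗ[R] C),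
      Module.Injective R I ∧ Function.Injective f ∧ Function.Surjective g ∧
      Function.Exact f g ∧ HasInjDimLE R n C

/-- The injective dimension of `M`. -/
noncomputable def injDim (R : Type u) [Ring R] (M : ModuleCat.{u} R) : ℕ∞ :=
  sInf {n : ℕ∞ | ∃ m : ℕ, n = m ∧ HasInjDimLE R m M}

/-!
If `W_k` is the `k`-th cosyzygy of `Y ∈ 𝒳` in an injective coresolution, then
`Ext¹(M, W_k) = Ext^{k+1}(M, Y)`. Syzygies `N` of an `𝒳`-complete resolution satisfy
`Ext¹(N, Y) = 0` because the resolution stays exact under `Hom(-, Y)`; dimension shifting gives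
`Ext¹(N, W_k) = 0` for all `k`, and then `Ext¹(M, W_k) = 0` whenever `𝒳-Gpd M ≤ k`. For `k = n`
and `M = R/I`, Baer's criterion makes `W_n` injective.
-/

open Function LinearMap

section Pullback

variable {R A X Y Z W : Type*} [Ring R] [AddCommGroup A] [Module R A] [AddCommGroup X]
  [Module R X] [AddCommGroup Y] [Module R Y] [AddCommGroup Z] [Module R Z]
  [AddCommGroup W] [Module R W]

theorem Function.Exact.exists_comp_eq_of_comp_eq_zero {f : A →ₗ[R] X} {g : X →ₗ[R] Z}
    (hfg : Exact f g) (hg : Surjective g) (h : X →ₗ[R] W) (hh : h ∘ₗ f = 0) :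
    ∃ ψ : Z →ₗ[R] W, ψ ∘ₗ g = h :=
  ⟨(range f).liftQ h (range_le_ker_iff.mpr hh) ∘ₗ (hfg.linearEquivOfSurjective hg).symm,
    by ext x; simp⟩

def LinearMap.pullback (a : X →ₗ[R] Z) (b : Y →ₗ[R] Z) : Submodule R (X × Y) :=
  (a ∘ₗ fst R X Y).eqLocus (b ∘ₗ snd R X Y)

variable (a : X →ₗ[R] Z) (b : Y →ₗ[R] Z)

def LinearMap.pullbackFst : a.pullback b →ₗ[R] X := fst R X Y ∘ₗ (a.pullback b).subtype

def LinearMap.pullbackSnd : a.pullback b →ₗ[R] Y := snd R X Y ∘ₗ (a.pullback b).subtype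

theorem LinearMap.mem_pullback {v : X × Y} : v ∈ a.pullback b ↔ a v.1 = b v.2 :=
  mem_eqLocus

theorem Function.Exact.exists_exact_pullback_snd {i : A →ₗ[R] X} (hi : Injective i)
    (ha : Surjective a) (hia : Exact i a) :
    ∃ j : A →ₗ[R] a.pullback b, Injective j ∧ Surjective (a.pullbackSnd b) ∧
      Exact j (a.pullbackSnd b) ∧ a.pullbackFst b ∘ₗ j = i := by
  refine ⟨codRestrict _ (inl R X Y ∘ₗ i) fun x => ?_, fun x y hxy => hi ?_, fun y => ?_,
    fun v => ?_, ?_⟩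
  · exact (mem_pullback a b).mpr (show a (i x) = b 0 by simp [hia.apply_apply_eq_zero])
  · exact congrArg (fun v : a.pullback b => (v : X × Y).1) hxy
  · obtain ⟨x, hx⟩ := ha (b y)
    exact ⟨⟨(x, y), (mem_pullback a b).mpr hx⟩, rfl⟩
  · obtain ⟨⟨x, y⟩, hv⟩ := v
    change y = 0 ↔ _
    constructor
    · rintro rfl
      obtain ⟨z, rfl⟩ := (hia x).mp (by simpa using (mem_pullback a b).mp hv)
      exact ⟨z, rfl⟩
    · rintro ⟨z, hz⟩
      exact congrArg (fun v : a.pullback b => (v : X × Y).2) hz.symm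
  · rfl

theorem Function.Exact.exists_exact_pullback_fst {i : A →ₗ[R] Y}
    (hb : Surjective b) (hib : Exact i b) :
    ∃ j : A →ₗ[R] a.pullback b, Surjective (a.pullbackFst b) ∧
      Exact j (a.pullbackFst b) ∧ a.pullbackSnd b ∘ₗ j = i := by
  refine ⟨codRestrict _ (inr R X Y ∘ₗ i) fun x => ?_, fun x => ?_, fun v => ?_, ?_⟩
  · exact (mem_pullback a b).mpr (show a 0 = b (i x) by simp [hib.apply_apply_eq_zero])
  · obtain ⟨y, hy⟩ := hb (a x)
    exact ⟨⟨(x, y), (mem_pullback a b).mpr hy.symm⟩, rfl⟩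
  · obtain ⟨⟨x, y⟩, hv⟩ := v
    change x = 0 ↔ _
    constructor
    · rintro rfl
      obtain ⟨z, rfl⟩ := (hib y).mp (by simpa using ((mem_pullback a b).mp hv).symm)
      exact ⟨z, rfl⟩
    · rintro ⟨z, hz⟩
      exact congrArg (fun v : a.pullback b => (v : X × Y).1) hz.symm
  · rfl

end Pullback

section ExtOne

variable {R : Type u} [Ring R]

variable (R) in
/-- Elementary form of `Ext¹_R(M, W) = 0`: along every short exact sequence `0 → K → B → M → 0`,
every map `K → W` extends to `B`. -/
def ExtOneVanishes (M W : Type u) [AddCommGroup M] [Module R M] [AddCommGroup W] [Module R W] :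
    Prop :=
  ∀ ⦃K B : Type u⦄ [AddCommGroup K] [Module R K] [AddCommGroup B] [Module R B]
    (f : K →ₗ[R] B) (g : B →ₗ[R] M), Injective f → Surjective g → Exact f g →
    ∀ φ : K →ₗ[R] W, ∃ ψ : B →ₗ[R] W, ψ ∘ₗ f = φ

variable {M M' W L G V E : Type u}
  [AddCommGroup M] [Module R M] [AddCommGroup M'] [Module R M'] [AddCommGroup W] [Module R W]
  [AddCommGroup L] [Module R L] [AddCommGroup G] [Module R G]
  [AddCommGroup V] [Module R V] [AddCommGroup E] [Module R E]

theorem ExtOneVanishes.of_linearEquiv_left (h : ExtOneVanishes R M W) (e : M ≃ₗ[R] M') :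
    ExtOneVanishes R M' W := fun _ _ _ _ _ _ f g hf hg hfg =>
  h f (e.symm.toLinearMap ∘ₗ g) hf (e.symm.surjective.comp hg)
    (LinearEquiv.postcomp_exact_iff_exact.mpr hfg)

theorem extOneVanishes_of_projective [Module.Projective R M] : ExtOneVanishes R M W := by
  intro _ _ _ _ _ _ f g hf hg hfg φ
  obtain ⟨r, hr⟩ := (hfg.split_tfae hf hg).out 0 1 |>.mp
    (Module.projective_lifting_property g LinearMap.id hg)
  exact ⟨φ ∘ₗ r, by rw [LinearMap.comp_assoc, hr, LinearMap.comp_id]⟩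

theorem Module.injective_of_forall_extOneVanishes_quotient
    (h : ∀ I : Ideal R, ExtOneVanishes R (R ⧸ I) W) : Module.Injective R W :=
  Module.Baer.injective fun I φ =>
    let ⟨ψ, hψ⟩ := h I I.subtype I.mkQ Subtype.val_injective I.mkQ_surjective
      (exact_subtype_mkQ I) φ
    ⟨ψ, fun x hx => LinearMap.congr_fun hψ ⟨x, hx⟩⟩

theorem ExtOneVanishes.exists_comp_eq (h : ExtOneVanishes R M V) {f : V →ₗ[R] E}
    {p : E →ₗ[R] W} (hf : Injective f) (hp : Surjective p) (hfp : Exact f p)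
    (μ : M →ₗ[R] W) : ∃ ν : M →ₗ[R] E, p ∘ₗ ν = μ := by
  obtain ⟨j, hj, hsnd, hexact, -⟩ := hfp.exists_exact_pullback_snd p μ hf hp
  obtain ⟨τ, hτ⟩ := (hexact.split_tfae hj hsnd).out 0 1 |>.mpr
    (h j _ hj hsnd hexact LinearMap.id)
  refine ⟨p.pullbackFst μ ∘ₗ τ, LinearMap.ext fun x => ?_⟩
  have hx : ((τ x : E × M)).2 = x := LinearMap.congr_fun hτ x
  change p (τ x : E × M).1 = μ x
  rw [(mem_pullback p μ).mp (τ x).2, hx]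

theorem extOneVanishes_of_exact_of_forall_exists_comp_eq {i : L →ₗ[R] G} {q : G →ₗ[R] M}
    (hq : Surjective q) (hiq : Exact i q) (hG : ExtOneVanishes R G W)
    (hext : ∀ χ : L →ₗ[R] W, ∃ θ : G →ₗ[R] W, θ ∘ₗ i = χ) : ExtOneVanishes R M W := by
  intro _ _ _ _ _ _ f g hf hg hfg φ
  obtain ⟨jK, hjK, hπG, hexactG, hπB_jK⟩ := hfg.exists_exact_pullback_snd g q hf hg
  obtain ⟨jL, hπB, hexactB, hπG_jL⟩ := hiq.exists_exact_pullback_fst g q hq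
  obtain ⟨Ψ, hΨ⟩ := hG jK _ hjK hπG hexactG φ
  obtain ⟨θ, hθ⟩ := hext (Ψ ∘ₗ jL)
  obtain ⟨ψ, hψ⟩ := hexactB.exists_comp_eq_of_comp_eq_zero hπB (Ψ - θ ∘ₗ g.pullbackSnd q) <| by
    rw [sub_comp, LinearMap.comp_assoc, hπG_jL, hθ, sub_self]
  refine ⟨ψ, ?_⟩
  rw [← hπB_jK, ← LinearMap.comp_assoc, hψ, sub_comp, hΨ, LinearMap.comp_assoc,
    hexactG.linearMap_comp_eq_zero, comp_zero, sub_zero]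

theorem extOneVanishes_of_syzygy_of_cosyzygy {i : L →ₗ[R] G} {q : G →ₗ[R] M}
    (hi : Injective i) (hq : Surjective q) (hiq : Exact i q) (hG : ExtOneVanishes R G W)
    (hL : ExtOneVanishes R L V) {f : V →ₗ[R] E} {p : E →ₗ[R] W} (hf : Injective f)
    (hp : Surjective p) (hfp : Exact f p) [Module.Injective R E] : ExtOneVanishes R M W := by
  refine extOneVanishes_of_exact_of_forall_exists_comp_eq hq hiq hG fun χ => ?_
  obtain ⟨ν, hν⟩ := hL.exists_comp_eq hf hp hfp χ
  obtain ⟨Λ, hΛ⟩ := Module.Injective.extension_property R E L G i hi ν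
  exact ⟨p ∘ₗ Λ, by rw [LinearMap.comp_assoc, hΛ, hν]⟩

end ExtOne

section XGorenstein

variable {R : Type u} [Ring R] {𝒳 : ModuleCat.{u} R → Prop}

theorem relDim_le_iff {𝒞 : ModuleCat.{u} R → Prop} {M : ModuleCat.{u} R} {k : ℕ} :
    relDim R 𝒞 M ≤ k ↔ ∃ m ≤ k, ∃ K, 𝒞 K ∧ ResWithKernel R 𝒞 m K M := by
  constructor
  · intro h
    have hne : {n : ℕ∞ | ∃ m : ℕ, n = m ∧ ∃ K, 𝒞 K ∧ ResWithKernel R 𝒞 m K M}.Nonempty :=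
      Set.nonempty_iff_ne_empty.mpr fun hempty => by simp [relDim, hempty] at h
    obtain ⟨m, hm, hres⟩ := csInf_mem hne
    rw [relDim, hm] at h
    exact ⟨m, by exact_mod_cast h, hres⟩
  · rintro ⟨m, hm, hres⟩
    exact (sInf_le ⟨m, rfl, hres⟩ : relDim R 𝒞 M ≤ m).trans (by exact_mod_cast hm)

theorem XCompleteResolution.exact_subtype_rangeRestrict (C : XCompleteResolution R 𝒳) (m : ℤ) :
    Exact (range (C.d m)).subtype (C.d (m + 1)).rangeRestrict := fun y => by
  simpa [Subtype.ext_iff] using C.exact m y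

variable (𝒳) in
def ExtOneVanishesOnSyzygies (W : Type u) [AddCommGroup W] [Module R W] : Prop :=
  ∀ (C : XCompleteResolution R 𝒳) (m : ℤ), ExtOneVanishes R (range (C.d m)) W

theorem extOneVanishesOnSyzygies_of_mem {Y : ModuleCat.{u} R} (hY : 𝒳 Y) :
    ExtOneVanishesOnSyzygies 𝒳 Y := by
  intro C m
  obtain ⟨k, rfl⟩ : ∃ k, m = k + 1 + 1 := ⟨m - 2, by omega⟩
  have := C.projective (k + 1 + 1)
  refine extOneVanishes_of_exact_of_forall_exists_comp_eq
    (C.d (k + 1 + 1)).surjective_rangeRestrict (C.exact_subtype_rangeRestrict (k + 1))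
    extOneVanishes_of_projective fun χ => ?_
  obtain ⟨θ, hθ⟩ := (C.homExact Y hY k (χ ∘ₗ (C.d (k + 1)).rangeRestrict)).mp <| by
    ext x
    have : (C.d (k + 1)).rangeRestrict (C.d k x) = 0 :=
      Subtype.ext ((C.exact k).apply_apply_eq_zero x)
    simp [this]
  refine ⟨θ, (cancel_right (C.d (k + 1)).surjective_rangeRestrict).mp ?_⟩
  rw [LinearMap.comp_assoc, ← hθ]
  rfl

theorem ExtOneVanishesOnSyzygies.of_exact {V E W : Type u} [AddCommGroup V] [Module R V]
    [AddCommGroup E] [Module R E] [AddCommGroup W] [Module R W] [Module.Injective R E]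
    (hV : ExtOneVanishesOnSyzygies 𝒳 V) {f : V →ₗ[R] E} {p : E →ₗ[R] W} (hf : Injective f)
    (hp : Surjective p) (hfp : Exact f p) : ExtOneVanishesOnSyzygies 𝒳 W := by
  intro C m
  obtain ⟨k, rfl⟩ : ∃ k, m = k + 1 := ⟨m - 1, by omega⟩
  have := C.projective (k + 1)
  exact extOneVanishes_of_syzygy_of_cosyzygy (range (C.d k)).injective_subtype
    (C.d (k + 1)).surjective_rangeRestrict (C.exact_subtype_rangeRestrict k)
    extOneVanishes_of_projective (hV C k) hf hp hfp

theorem ExtOneVanishesOnSyzygies.extOneVanishes {W : Type u} [AddCommGroup W] [Module R W]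
    (hW : ExtOneVanishesOnSyzygies 𝒳 W) {G : ModuleCat.{u} R}
    (hG : XGorensteinProjective R 𝒳 G) : ExtOneVanishes R G W := by
  obtain ⟨C, ⟨e⟩⟩ := hG
  exact (hW C (-1)).of_linearEquiv_left
    ((LinearEquiv.ofEq _ _ (C.exact (-1)).linearMap_ker_eq).symm.trans e.symm)

variable (𝒳) in
/-- For the `k`-th cosyzygy `W` of a module `Y ∈ 𝒳` this says `Ext^{k+1}(M, Y) = 0` whenever
`𝒳-Gpd M ≤ k`. -/
def ExtOneVanishesOnXGpdLE (k : ℕ) (W : ModuleCat.{u} R) : Prop :=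
  ExtOneVanishesOnSyzygies 𝒳 W ∧ ∀ M : ModuleCat.{u} R, xGpd R 𝒳 M ≤ k → ExtOneVanishes R M W

theorem ExtOneVanishesOnSyzygies.extOneVanishesOnXGpdLE_zero {W : ModuleCat.{u} R}
    (hW : ExtOneVanishesOnSyzygies 𝒳 W) : ExtOneVanishesOnXGpdLE 𝒳 0 W := by
  refine ⟨hW, fun M hM => ?_⟩
  obtain ⟨m, hm, K, hK, hres⟩ := relDim_le_iff.mp hM
  obtain rfl : m = 0 := Nat.le_zero.mp hm
  obtain ⟨e⟩ := hres
  exact (hW.extOneVanishes hK).of_linearEquiv_left e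

theorem ExtOneVanishesOnXGpdLE.succ {k : ℕ} {V E W : ModuleCat.{u} R} [Module.Injective R E]
    (hV : ExtOneVanishesOnXGpdLE 𝒳 k V) {f : V →ₗ[R] E} {p : E →ₗ[R] W} (hf : Injective f)
    (hp : Surjective p) (hfp : Exact f p) : ExtOneVanishesOnXGpdLE 𝒳 (k + 1) W := by
  have hW : ExtOneVanishesOnSyzygies 𝒳 W := hV.1.of_exact hf hp hfp
  refine ⟨hW, fun M hM => ?_⟩
  obtain ⟨m, hm, K, hK, hres⟩ := relDim_le_iff.mp hM
  cases m with
  | zero =>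
    exact hW.extOneVanishesOnXGpdLE_zero.2 M (relDim_le_iff.mpr ⟨0, le_rfl, K, hK, hres⟩)
  | succ m =>
    obtain ⟨G, L, i, q, hG, hi, hq, hiq, hres⟩ := hres
    have hL : xGpd R 𝒳 L ≤ k := relDim_le_iff.mpr ⟨m, by omega, K, hK, hres⟩
    exact extOneVanishes_of_syzygy_of_cosyzygy hi hq hiq (hW.extOneVanishes hG) (hV.2 L hL)
      hf hp hfp

end XGorenstein

theorem ModuleCat.exists_injective_exact {R : Type u} [Ring R] (W : ModuleCat.{u} R) :
    ∃ (E C : ModuleCat.{u} R) (f : W →ₗ[R] E) (p : E →ₗ[R] C),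
      Module.Injective R E ∧ Injective f ∧ Surjective p ∧ Exact f p := by
  obtain ⟨⟨E, _, f, _⟩⟩ := CategoryTheory.EnoughInjectives.presentation W
  exact ⟨E, ModuleCat.of R (E ⧸ range f.hom), f.hom, (range f.hom).mkQ,
    Module.injective_module_of_injective_object R E, (ModuleCat.mono_iff_injective f).mp ‹_›,
    (range f.hom).mkQ_surjective, f.hom.exact_map_mkQ_range⟩

theorem hasInjDimLE_of_extOneVanishesOnXGpdLE {R : Type u} [Ring R] {𝒳 : ModuleCat.{u} R → Prop}
    (n k : ℕ) (W : ModuleCat.{u} R) (hW : ExtOneVanishesOnXGpdLE 𝒳 k W)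
    (h : ∀ I : Ideal R, xGpd R 𝒳 (ModuleCat.of R (R ⧸ I)) ≤ (n + k : ℕ)) : HasInjDimLE R n W := by
  induction n generalizing k W with
  | zero =>
    exact Module.injective_of_forall_extOneVanishes_quotient fun I => hW.2 _ (by simpa using h I)
  | succ n ih =>
    obtain ⟨E, C, f, p, hE, hf, hp, hfp⟩ := W.exists_injective_exact
    refine ⟨E, C, f, p, hE, hf, hp, hfp, ih (k + 1) C (hW.succ hf hp hfp) fun I => ?_⟩
    rw [show n + (k + 1) = n + 1 + k by omega]
    exact h I

theorem injDim_le_of_xGpd_quotients_le_general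
    (R : Type u) [Ring R] (𝒳 : ModuleCat.{u} R → Prop)
    (n : ℕ)
    (h : ∀ I : Ideal R, xGpd R 𝒳 (ModuleCat.of R (R ⧸ I)) ≤ (n : ℕ∞)) :
    ∀ Y : ModuleCat.{u} R, 𝒳 Y → injDim R Y ≤ (n : ℕ∞) := by
  intro Y hY
  exact sInf_le ⟨n, rfl, hasInjDimLE_of_extOneVanishesOnXGpdLE n 0 Y
    (extOneVanishesOnSyzygies_of_mem hY).extOneVanishesOnXGpdLE_zero h⟩

/-- If `𝒳-Gpd(R/I) ≤ n` for every left ideal `I` of `R`, then every module in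
the class `𝒳` has injective dimension at most `n`. -/
theorem injDim_le_of_xGpd_quotients_le
    (R : Type u) [Ring R] (𝒳 : ModuleCat.{u} R → Prop)
    (h𝒳 : ∀ P : ModuleCat.{u} R, Module.Projective R P → 𝒳 P)
    (n : ℕ)
    (h : ∀ I : Ideal R, xGpd R 𝒳 (ModuleCat.of R (R ⧸ I)) ≤ (n : ℕ∞)) :
    ∀ Y : ModuleCat.{u} R, 𝒳 Y → injDim R Y ≤ (n : ℕ∞) :=
  injDim_le_of_xGpd_quotients_le_general R 𝒳 n h
end
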